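/- arXiv:1904.10314 — 7 statements merged into one kernel-verified Lean document; each statement's English description precedes it below -/
import Mathlib

section
/- Let L be a complete lattice. Let 𝒮 be the category whose objects are pairs (X, S) with X a set and S : L → Set X satisfying the sheaf-of-monomorphisms condition, and whose morphisms (X,S) → (Y,T) are functions u : X → Y such that u '' (S(a)) ⊆ T(a) for all a ∈ L. Let ℱ be the category whose objects are pairs (X, f) with f : X → L a function (fuzzy sets over L), and whose morphisms (X,f) → (Y,g) are functions u : X → Y such that f(x) ≤ g(u(x)) for all x ∈ X. Then there is an equivalence of categories 𝒮 ≃ ℱ, given on objects by (X,S) ↦ (X, ψ_S) where ψ_S(x) = sSup {c | x ∈ S(c)}, with quasi-inverse (X,f) ↦ (X, a ↦ {x | a ≤ f(x)}). (Theorem 12, Barr's theorem: the category of sheaves of monomorphisms on L₊ is equivalent to the category of fuzzy sets over L.) -/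
open CategoryTheory

universe u

/-- A sheaf of monomorphisms on Barr's augmented locale `L₊`, encoded by its
generic fibre `carrier` together with the family of subsets `S a ⊆ carrier`
(the images of the sections over `a`), satisfying the sheaf-of-monomorphisms
condition `S (sSup C) = ⋂ c ∈ C, S c`. -/
structure MonSheaf (L : Type u) [CompleteLattice L] : Type (u + 1) where
  carrier : Type u
  S : L → Set carrier
  cond : ∀ C : Set L, S (sSup C) = ⋂ c ∈ C, S c

/-- A fuzzy set over `L`: a set together with a function to `L`. -/
structure FuzzySet (L : Type u) [CompleteLattice L] : Type (u + 1) where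
  carrier : Type u
  f : carrier → L

instance monSheafCategory (L : Type u) [CompleteLattice L] :
    Category (MonSheaf L) where
  Hom A B := {u : A.carrier → B.carrier // ∀ a : L, u '' A.S a ⊆ B.S a}
  id A := ⟨id, fun a => by simp⟩
  comp {A B C} f g := ⟨g.1 ∘ f.1, fun a => by
    rw [Set.image_comp]
    exact (Set.image_mono (f := g.1) (f.2 a)).trans (g.2 a)⟩
  id_comp f := Subtype.ext rfl
  comp_id f := Subtype.ext rfl
  assoc f g h := Subtype.ext rfl

instance fuzzySetCategory (L : Type u) [CompleteLattice L] :
    Category (FuzzySet L) where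
  Hom A B := {u : A.carrier → B.carrier // ∀ x : A.carrier, A.f x ≤ B.f (u x)}
  id A := ⟨id, fun x => le_refl _⟩
  comp {A B C} f g := ⟨g.1 ∘ f.1, fun x => (f.2 x).trans (g.2 (f.1 x))⟩
  id_comp f := Subtype.ext rfl
  comp_id f := Subtype.ext rfl
  assoc f g h := Subtype.ext rfl

/-- The level-cut sheaf of monomorphisms `T(f)` associated to a fuzzy set. -/
def levelCut {L : Type u} [CompleteLattice L] (B : FuzzySet L) : MonSheaf L where
  carrier := B.carrier
  S a := {x : B.carrier | a ≤ B.f x}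
  cond C := by ext x; simp [sSup_le_iff]

/-! The sheaf condition makes `{c | x ∈ S c}` closed under arbitrary joins, so it is the
principal down-set of its join `ψ_S(x)`: `x ∈ S a ↔ a ≤ ψ_S(x)`. Hence `S` is recovered
as the level cuts of `ψ_S`, and `ψ` of a level-cut sheaf is the original fuzzy set because
`sSup (Iic b) = b`. In both directions the comparison maps are identities. -/

variable {L : Type u} [CompleteLattice L]

namespace MonSheaf

theorem S_antitone (A : MonSheaf L) : Antitone A.S := by
  intro a b hab x hx
  have hx' : x ∈ ⋂ c ∈ ({a, b} : Set L), A.S c := by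
    rwa [← A.cond, sSup_pair, sup_eq_right.mpr hab]
  exact Set.mem_iInter₂.mp hx' a (Set.mem_insert a _)

/-- The membership function `ψ_S` of a sheaf of monomorphisms. -/
def membership (A : MonSheaf L) (x : A.carrier) : L :=
  sSup {c | x ∈ A.S c}

theorem mem_S_membership (A : MonSheaf L) (x : A.carrier) : x ∈ A.S (A.membership x) := by
  rw [membership, A.cond]
  exact Set.mem_iInter₂.mpr fun _ hc => hc

theorem mem_S_iff_le_membership (A : MonSheaf L) {x : A.carrier} {a : L} :
    x ∈ A.S a ↔ a ≤ A.membership x :=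
  ⟨fun h => le_sSup h, fun h => A.S_antitone h (A.mem_S_membership x)⟩

theorem membership_le_membership {A B : MonSheaf L} (u : A ⟶ B) (x : A.carrier) :
    A.membership x ≤ B.membership (u.1 x) :=
  sSup_le_sSup fun c hc => u.2 c ⟨x, hc, rfl⟩

theorem membership_levelCut (B : FuzzySet L) (x : B.carrier) :
    (levelCut B).membership x = B.f x :=
  csSup_Iic

def toFuzzySet (A : MonSheaf L) : FuzzySet L :=
  ⟨A.carrier, A.membership⟩

variable (L) in
def toFuzzySetFunctor : MonSheaf L ⥤ FuzzySet L where
  obj := toFuzzySet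
  map u := ⟨u.1, membership_le_membership u⟩

def isoLevelCutToFuzzySet (A : MonSheaf L) : A ≅ levelCut A.toFuzzySet where
  hom := ⟨id, fun _ => Set.image_subset_iff.mpr fun _ => A.mem_S_iff_le_membership.1⟩
  inv := ⟨id, fun _ => Set.image_subset_iff.mpr fun _ => A.mem_S_iff_le_membership.2⟩

end MonSheaf

namespace FuzzySet

variable (L) in
def levelCutFunctor : FuzzySet L ⥤ MonSheaf L where
  obj := levelCut
  map u := ⟨u.1, fun _ => Set.image_subset_iff.mpr fun x hx => hx.trans (u.2 x)⟩

def toFuzzySetLevelCutIso (B : FuzzySet L) : (levelCut B).toFuzzySet ≅ B where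
  hom := ⟨id, fun x => (MonSheaf.membership_levelCut B x).le⟩
  inv := ⟨id, fun x => (MonSheaf.membership_levelCut B x).ge⟩

end FuzzySet

variable (L) in
def monSheafEquivFuzzySet : MonSheaf L ≌ FuzzySet L where
  functor := MonSheaf.toFuzzySetFunctor L
  inverse := FuzzySet.levelCutFunctor L
  unitIso := NatIso.ofComponents MonSheaf.isoLevelCutToFuzzySet fun _ => rfl
  counitIso := NatIso.ofComponents FuzzySet.toFuzzySetLevelCutIso fun _ => rfl

/-- Theorem 12 (Barr): the category of sheaves of monomorphisms on `L₊` is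
equivalent to the category of fuzzy sets over `L`, via `F ↦ ψ_F` with
quasi-inverse the level-cut construction `f ↦ T(f)`. -/
theorem stmt_1 (L : Type u) [CompleteLattice L] :
    ∃ e : MonSheaf L ≌ FuzzySet L,
      (∀ A : MonSheaf L,
        e.functor.obj A = ⟨A.carrier, fun x => sSup {c : L | x ∈ A.S c}⟩) ∧
      (∀ B : FuzzySet L, e.inverse.obj B = levelCut B) :=
  ⟨monSheafEquivFuzzySet L, fun _ => rfl, fun _ => rfl⟩
end

section
/- Let L be a complete lattice, let S : L → Set X and T : L → Set Y satisfy the sheaf-of-monomorphisms condition, and let u : X → Y be any function. Then u '' (S(a)) ⊆ T(a) for all a ∈ L if and only if ψ_S(x) ≤ ψ_T(u(x)) for all x ∈ X, where ψ_S(x) = sSup {c | x ∈ S(c)} and ψ_T(y) = sSup {c | y ∈ T(c)}. (Morphism-level correspondence of Barr's equivalence: sheaf maps correspond exactly to fuzzy set maps.) -/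
/-!
A family with `S (sSup C) = ⋂ c ∈ C, S c` is antitone and contains each `x` at its extent
`sSup {c | x ∈ S c}`, so `x ∈ S a ↔ a ≤ extent S x`: the fibres `{a | x ∈ S a}` are exactly the
principal lower sets of the extents, and inclusion of such lower sets is comparison of extents.
-/

namespace SheafOfMonos

variable {L X : Type*} [CompleteLattice L] {S : L → Set X}

def extent (S : L → Set X) (x : X) : L := sSup {c | x ∈ S c}

theorem antitone_of_sSup_eq_iInter (hS : ∀ C : Set L, S (sSup C) = ⋂ c ∈ C, S c) :
    Antitone S := by
  intro a b hab x hx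
  have hpair : S (sSup {a, b}) = ⋂ c ∈ ({a, b} : Set L), S c := hS {a, b}
  rw [sSup_pair, sup_eq_right.mpr hab] at hpair
  exact Set.mem_iInter₂.mp (hpair ▸ hx) a (Set.mem_insert a {b})

theorem mem_extent (hS : ∀ C : Set L, S (sSup C) = ⋂ c ∈ C, S c) (x : X) :
    x ∈ S (extent S x) := by
  rw [extent, hS]
  exact Set.mem_iInter₂.mpr fun _ hc => hc

theorem mem_iff_le_extent (hS : ∀ C : Set L, S (sSup C) = ⋂ c ∈ C, S c) {x : X} {a : L} :
    x ∈ S a ↔ a ≤ extent S x :=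
  ⟨fun hx => le_sSup hx, fun ha => antitone_of_sSup_eq_iInter hS ha (mem_extent hS x)⟩

end SheafOfMonos

open SheafOfMonos in
/-- Morphism-level correspondence of Barr's equivalence: sheaf maps correspond
exactly to fuzzy set maps. -/
theorem stmt_4 {L X Y : Type*} [CompleteLattice L] (S : L → Set X) (T : L → Set Y)
    (hS : ∀ C : Set L, S (sSup C) = ⋂ c ∈ C, S c)
    (hT : ∀ C : Set L, T (sSup C) = ⋂ c ∈ C, T c)
    (u : X → Y) :
    (∀ a : L, u '' S a ⊆ T a) ↔
      ∀ x : X, sSup {c : L | x ∈ S c} ≤ sSup {c : L | u x ∈ T c} := by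
  change _ ↔ ∀ x, extent S x ≤ extent T (u x)
  constructor
  · intro h x
    exact (mem_iff_le_extent hT).mp (h _ ⟨x, mem_extent hS x, rfl⟩)
  · rintro h a _ ⟨x, hx, rfl⟩
    exact (mem_iff_le_extent hT).mpr (((mem_iff_le_extent hS).mp hx).trans (h x))
end

section
/- Let L be a complete lattice and F : Lᵒᵖ ⥤ Type a presheaf. Define the image presheaf Im F by Im F(a) := the image of the restriction map F(a) → F(⊥), with restriction maps the inclusions Im F(b) ⊆ Im F(a) ⊆ F(⊥) for a ≤ b, and let π : F ⟶ Im F be the natural transformation given by the epi–mono factorizations. Then Im F is a presheaf of monomorphisms, and π is initial among maps from F to presheaves of monomorphisms: for every presheaf of monomorphisms G and every natural transformation α : F ⟶ G there exists a unique natural transformation β : Im F ⟶ G with β ∘ π = α. Equivalently, the image functor is left adjoint to the inclusion of presheaves of monomorphisms into all presheaves. (Lemma 26.) -/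
/-!
The restriction maps of `Im F` are inclusions, hence injective. Since `π` is objectwise
surjective it is an epimorphism, which gives uniqueness. For existence, a section of a
presheaf of monomorphisms `G` is determined by its restriction to `⊥`, and by naturality
`α(y)|⊥ = α(y|⊥)`; so `α(y)` depends only on `π(y)`, and `α` descends along `π`.
-/

open CategoryTheory Opposite

universe u v

/-- The image presheaf `Im F`: `Im F(a)` is the image of the restriction map
`F(a) → F(⊥)` to the generic fibre, with restriction maps the inclusions. -/
def ImPresheaf {L : Type u} [CompleteLattice L] (F : Lᵒᵖ ⥤ Type v) :
    Lᵒᵖ ⥤ Type v where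
  obj a := ↥(Set.range (F.map (homOfLE (bot_le : (⊥ : L) ≤ a.unop)).op))
  map {a b} f := TypeCat.ofHom fun x => ⟨x.1, by
    obtain ⟨y, hy⟩ := x.2
    refine ⟨F.map f y, ?_⟩
    rw [← hy, ← FunctorToTypes.map_comp_apply]
    congr 1⟩
  map_id a := rfl
  map_comp f g := rfl

/-- The natural epi–mono factorization map `π : F ⟶ Im F`. -/
def toImPresheaf {L : Type u} [CompleteLattice L] (F : Lᵒᵖ ⥤ Type v) :
    F ⟶ ImPresheaf F where
  app a := TypeCat.ofHom fun y => ⟨F.map (homOfLE (bot_le : (⊥ : L) ≤ a.unop)).op y, ⟨y, rfl⟩⟩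
  naturality a b f := by
    ext y
    apply Subtype.ext
    show F.map _ (F.map f y) = F.map _ y
    rw [← FunctorToTypes.map_comp_apply]
    congr 1

theorem map_injective_of_forall_le {L : Type u} [Preorder L] {G : Lᵒᵖ ⥤ Type v}
    (hG : ∀ (a b : L) (h : a ≤ b), Function.Injective (G.map (homOfLE h).op))
    {a b : Lᵒᵖ} (f : a ⟶ b) : Function.Injective (G.map f) :=
  hG b.unop a.unop (leOfHom f.unop)

namespace ImPresheaf

variable {L : Type u} [CompleteLattice L] {F G : Lᵒᵖ ⥤ Type v}

abbrev toBot (a : Lᵒᵖ) : a ⟶ op ⊥ := (homOfLE (bot_le : (⊥ : L) ≤ a.unop)).op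

theorem map_injective {a b : Lᵒᵖ} (f : a ⟶ b) :
    Function.Injective ((ImPresheaf F).map f) :=
  fun _ _ h => Subtype.ext (congrArg (fun z : (ImPresheaf F).obj b => z.1) h)

theorem toImPresheaf_app_surjective (a : Lᵒᵖ) :
    Function.Surjective ((toImPresheaf F).app a) :=
  fun ⟨_, y, hy⟩ => ⟨y, Subtype.ext hy⟩

instance epi_toImPresheaf : Epi (toImPresheaf F) :=
  have (a : Lᵒᵖ) : Epi ((toImPresheaf F).app a) :=
    (epi_iff_surjective _).2 (toImPresheaf_app_surjective a)
  NatTrans.epi_of_epi_app _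

noncomputable def liftApp (α : F ⟶ G) (a : Lᵒᵖ) (x : (ImPresheaf F).obj a) : G.obj a :=
  α.app a x.2.choose

theorem map_toBot_liftApp (α : F ⟶ G) (a : Lᵒᵖ) (x : (ImPresheaf F).obj a) :
    G.map (toBot a) (liftApp α a x) = α.app (op ⊥) x.1 := by
  rw [liftApp, ← NatTrans.naturality_apply, x.2.choose_spec]

/-- In a presheaf of monomorphisms, sections are determined by their generic fibre. -/
theorem liftApp_eq {α : F ⟶ G}
    (hG : ∀ (a b : L) (h : a ≤ b), Function.Injective (G.map (homOfLE h).op))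
    {a : Lᵒᵖ} {x : (ImPresheaf F).obj a} {z : G.obj a}
    (hz : G.map (toBot a) z = α.app (op ⊥) x.1) : liftApp α a x = z :=
  map_injective_of_forall_le hG (toBot a) ((map_toBot_liftApp α a x).trans hz.symm)

noncomputable def lift (α : F ⟶ G)
    (hG : ∀ (a b : L) (h : a ≤ b), Function.Injective (G.map (homOfLE h).op)) :
    ImPresheaf F ⟶ G where
  app a := TypeCat.ofHom (liftApp α a)
  naturality a b f := by
    ext x
    change liftApp α b ((ImPresheaf F).map f x) = G.map f (liftApp α a x)
    refine liftApp_eq hG ?_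
    rw [← Functor.map_comp_apply, Subsingleton.elim (f ≫ toBot b) (toBot a),
      map_toBot_liftApp]
    rfl

theorem toImPresheaf_comp_lift (α : F ⟶ G)
    (hG : ∀ (a b : L) (h : a ≤ b), Function.Injective (G.map (homOfLE h).op)) :
    toImPresheaf F ≫ lift α hG = α := by
  ext a y
  exact liftApp_eq hG (NatTrans.naturality_apply α (toBot a) y).symm

end ImPresheaf

open ImPresheaf in
/-- Lemma 26: `Im F` is a presheaf of monomorphisms, and `π : F ⟶ Im F` is
initial among maps from `F` to presheaves of monomorphisms; equivalently the
image functor is left adjoint to the inclusion of presheaves of monomorphisms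
in all presheaves. -/
theorem stmt_11 {L : Type u} [CompleteLattice L] (F : Lᵒᵖ ⥤ Type v) :
    (∀ (a b : L) (h : a ≤ b),
      Function.Injective ((ImPresheaf F).map (homOfLE h).op)) ∧
    ∀ (G : Lᵒᵖ ⥤ Type v),
      (∀ (a b : L) (h : a ≤ b), Function.Injective (G.map (homOfLE h).op)) →
      ∀ α : F ⟶ G, ∃! β : ImPresheaf F ⟶ G, toImPresheaf F ≫ β = α := by
  refine ⟨fun _ _ _ => map_injective _, fun G hG α =>
    ⟨lift α hG, toImPresheaf_comp_lift α hG, ?_⟩⟩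
  intro β hβ
  exact (cancel_epi (toImPresheaf F)).1 (hβ.trans (toImPresheaf_comp_lift α hG).symm)
end

section
/- Let L be a complete linear order, let S : L → Set X and T : L → Set Y satisfy the sheaf-of-monomorphisms condition, and let f : X → Y satisfy f '' (S(a)) ⊆ T(a) for all a ∈ L. Suppose f is a stalkwise epimorphism: f : X → Y is surjective (surjectivity on the generic fibre, i.e. the stalk at the adjoined initial point 0 of L₊), and for every x ∈ L with x ≠ ⊤ one has ⋃_{s > x} T(s) ⊆ f '' (⋃_{s > x} S(s)). Then f is an epimorphism of sheaves, i.e. a local epimorphism: for every a ∈ L, every u ∈ T(a), and every t < a, there exists v ∈ S(t) with f(v) = u. (Lemma 32, epimorphism part.) -/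
theorem antitone_of_sSup_eq_biInter {L X : Type*} [CompleteLattice L] {S : L → Set X}
    (hS : ∀ C : Set L, S (sSup C) = ⋂ c ∈ C, S c) : Antitone S := by
  intro b c hbc
  have hpair := hS {b, c}
  rw [sSup_pair, sup_eq_right.mpr hbc] at hpair
  rw [hpair]
  exact Set.biInter_subset_of_mem (Set.mem_insert b {c})

theorem stmt_14_general {L X Y : Type*} [CompleteLinearOrder L]
    (S : L → Set X) (T : L → Set Y)
    (hS : ∀ C : Set L, S (sSup C) = ⋂ c ∈ C, S c)
    (f : X → Y)
    (hstalk : ∀ x : L, x ≠ ⊤ →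
      (⋃ s ∈ {s : L | x < s}, T s) ⊆ f '' ⋃ s ∈ {s : L | x < s}, S s) :
    ∀ a : L, ∀ u ∈ T a, ∀ t : L, t < a → ∃ v ∈ S t, f v = u := by
  intro a u hu t hta
  obtain ⟨v, hv, rfl⟩ := hstalk t hta.ne_top (Set.mem_biUnion hta hu)
  obtain ⟨s, hts, hvs⟩ := Set.mem_iUnion₂.mp hv
  exact ⟨v, antitone_of_sSup_eq_biInter hS hts.le hvs, rfl⟩

/-- Lemma 32, epimorphism part: a stalkwise epimorphism of sheaves of monomorphisms
on a totally ordered locale is a local epimorphism, hence an epimorphism of sheaves. -/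
theorem stmt_14 {L X Y : Type*} [CompleteLinearOrder L]
    (S : L → Set X) (T : L → Set Y)
    (hS : ∀ C : Set L, S (sSup C) = ⋂ c ∈ C, S c)
    (hT : ∀ C : Set L, T (sSup C) = ⋂ c ∈ C, T c)
    (f : X → Y) (hf : ∀ a : L, f '' S a ⊆ T a)
    (hsurj : Function.Surjective f)
    (hstalk : ∀ x : L, x ≠ ⊤ →
      (⋃ s ∈ {s : L | x < s}, T s) ⊆ f '' ⋃ s ∈ {s : L | x < s}, S s) :
    ∀ a : L, ∀ u ∈ T a, ∀ t : L, t < a → ∃ v ∈ S t, f v = u :=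
  stmt_14_general S T hS f hstalk
end

section
/- Let L be an interval (a densely ordered complete linear order), let S : L → Set X and T : L → Set Y satisfy the sheaf-of-monomorphisms condition, and let f : X → Y satisfy f '' (S(a)) ⊆ T(a) for all a ∈ L. Suppose f is a stalkwise isomorphism: f : X → Y is a bijection (bijectivity on the generic fibre), and for every x ∈ L with x ≠ ⊤, f restricts to a bijection from ⋃_{s > x} S(s) onto ⋃_{s > x} T(s). Then f is an isomorphism of sheaves: f is bijective and f '' (S(a)) = T(a) for every a ∈ L. (Lemma 32, isomorphism part.) -/
section SheafCondition

variable {L X : Type*} [CompleteLattice L] {S : L → Set X}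

theorem antitone_of_sSup_eq_iInter (hS : ∀ C : Set L, S (sSup C) = ⋂ c ∈ C, S c) :
    Antitone S := by
  intro a b hab
  rw [← sup_eq_right.mpr hab, ← sSup_pair, hS]
  exact Set.biInter_subset_of_mem (Set.mem_insert a {b})

theorem mem_sSup_setOf_mem (hS : ∀ C : Set L, S (sSup C) = ⋂ c ∈ C, S c) (x : X) :
    x ∈ S (sSup {b | x ∈ S b}) := by
  rw [hS]
  exact Set.mem_iInter₂.mpr fun _ hb => hb

end SheafCondition

/-- Each `x` lies in `S m` for the largest such level `m`; if `f x ∈ T a` with `m < a`, then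
`f x` lies in the stalk of `T` at `m`, so `x` lies in the stalk of `S` at `m`, i.e. in some
`S s` with `s > m`, contradicting maximality. -/
theorem image_eq_of_surjOn_stalks {L X Y : Type*} [CompleteLinearOrder L]
    {S : L → Set X} {T : L → Set Y} (hS : ∀ C : Set L, S (sSup C) = ⋂ c ∈ C, S c)
    {f : X → Y} (hf : ∀ a, f '' S a ⊆ T a) (hbij : Function.Bijective f)
    (hstalk : ∀ x : L, x ≠ ⊤ → Set.SurjOn f (⋃ s > x, S s) (⋃ s > x, T s)) (a : L) :
    f '' S a = T a := by
  refine (hf a).antisymm fun y hy => ?_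
  obtain ⟨x, rfl⟩ := hbij.surjective y
  set m := sSup {b | x ∈ S b}
  have ha : a ≤ m := by
    by_contra! hma
    obtain ⟨x', hx', hfx'⟩ :=
      hstalk m (hma.trans_le le_top).ne (Set.mem_biUnion (x := a) hma hy)
    obtain ⟨s, hms, hxs⟩ := Set.mem_iUnion₂.mp hx'
    rw [hbij.injective hfx'] at hxs
    exact (le_sSup (s := {b | x ∈ S b}) hxs).not_gt hms
  exact ⟨x, antitone_of_sSup_eq_iInter hS ha (mem_sSup_setOf_mem hS x), rfl⟩

theorem stmt_15_general {L X Y : Type*} [CompleteLinearOrder L]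
    (S : L → Set X) (T : L → Set Y)
    (hS : ∀ C : Set L, S (sSup C) = ⋂ c ∈ C, S c)
    (f : X → Y) (hf : ∀ a : L, f '' S a ⊆ T a)
    (hbij : Function.Bijective f)
    (hstalk : ∀ x : L, x ≠ ⊤ →
      Set.BijOn f (⋃ s ∈ {s : L | x < s}, S s) (⋃ s ∈ {s : L | x < s}, T s)) :
    Function.Bijective f ∧ ∀ a : L, f '' S a = T a :=
  ⟨hbij, image_eq_of_surjOn_stalks hS hf hbij fun x hx => (hstalk x hx).surjOn⟩

/-- Lemma 32, isomorphism part: a stalkwise isomorphism of sheaves of monomorphisms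
on an interval is an isomorphism of sheaves. -/
theorem stmt_15 {L X Y : Type*} [CompleteLinearOrder L] [DenselyOrdered L]
    (S : L → Set X) (T : L → Set Y)
    (hS : ∀ C : Set L, S (sSup C) = ⋂ c ∈ C, S c)
    (hT : ∀ C : Set L, T (sSup C) = ⋂ c ∈ C, T c)
    (f : X → Y) (hf : ∀ a : L, f '' S a ⊆ T a)
    (hbij : Function.Bijective f)
    (hstalk : ∀ x : L, x ≠ ⊤ →
      Set.BijOn f (⋃ s ∈ {s : L | x < s}, S s) (⋃ s ∈ {s : L | x < s}, T s)) :
    Function.Bijective f ∧ ∀ a : L, f '' S a = T a :=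
  stmt_15_general S T hS f hf hbij hstalk
end

section
/- Let L be an interval (a densely ordered complete linear order) and let F : Lᵒᵖ ⥤ Type be any presheaf. For a ≠ ⊥ let LF(a) := lim_{b < a} F(b), the set of compatible families of sections over all b < a, and let η_a : F(a) → LF(a) be the canonical map sending a section to its family of restrictions. Then for every x ∈ L with x ≠ ⊤, η induces a bijection on stalks: the canonical map colim_{s > x} F(s) → colim_{s > x} LF(s) is a bijection. (Lemma 34x, part 2: the associated sheaf map η : F → L²F induces bijections F_x ≅ (L²F)_x on all stalks, where stalks of presheaves are defined by the same filtered colimit F_x = colim_{x < s} F(s) as for sheaves.) -/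
open CategoryTheory CategoryTheory.Limits Opposite

universe u

/-- The separated presheaf `LF`: `LF(a) = lim_{b < a} F(b)` is the set of
compatible families of sections over all `b < a`, with restriction maps given
by truncation of families. -/
def LFPresheaf {L : Type u} [Preorder L] (F : Lᵒᵖ ⥤ Type u) : Lᵒᵖ ⥤ Type u where
  obj a :=
    {x : ∀ b : {b : L // b < a.unop}, F.obj (op b.1) //
      ∀ (b c : {b : L // b < a.unop}) (h : c.1 ≤ b.1),
        F.map (homOfLE h).op (x b) = x c}
  map {a b} f := TypeCat.ofHom fun x =>
    ⟨fun d => x.1 ⟨d.1, lt_of_lt_of_le d.2 f.unop.le⟩,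
      fun d e h => x.2 ⟨d.1, lt_of_lt_of_le d.2 f.unop.le⟩
        ⟨e.1, lt_of_lt_of_le e.2 f.unop.le⟩ h⟩
  map_id a := rfl
  map_comp f g := rfl

/-- The canonical map `η : F ⟶ LF` sending a section to its family of
restrictions. -/
def etaLF {L : Type u} [Preorder L] (F : Lᵒᵖ ⥤ Type u) : F ⟶ LFPresheaf F where
  app a := TypeCat.ofHom fun y =>
    ⟨fun b => F.map (homOfLE b.2.le).op y, fun b c h => by
      rw [← FunctorToTypes.map_comp_apply, ← op_comp, homOfLE_comp]⟩
  naturality a b f := by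
    ext y
    apply Subtype.ext
    funext d
    show F.map _ (F.map f y) = F.map _ y
    rw [← FunctorToTypes.map_comp_apply]
    congr 1

/-- The diagram `s ↦ F(s)`, for `s > x`, whose colimit is the stalk `F_x`. -/
def stalkDiagram {L : Type u} [Preorder L] (F : Lᵒᵖ ⥤ Type u) (x : L) :
    ({s : L // x < s})ᵒᵖ ⥤ Type u :=
  (Monotone.functor (Subtype.mono_coe _)).op ⋙ F

/-- The stalk of a presheaf at `x`: the filtered colimit `F_x = colim_{x < s} F(s)`. -/
noncomputable def stalk {L : Type u} [Preorder L] (F : Lᵒᵖ ⥤ Type u) (x : L) :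
    Type u :=
  colimit (stalkDiagram F x)

/-- The map induced by `η : F ⟶ LF` on stalks at `x`. -/
noncomputable def stalkEta {L : Type u} [Preorder L] (F : Lᵒᵖ ⥤ Type u) (x : L) :
    stalk F x ⟶ stalk (LFPresheaf F) x :=
  colimMap (Functor.whiskerLeft (Monotone.functor (Subtype.mono_coe _)).op (etaLF F))

/-!
Both stalks are colimits over `s > x`, and density lets every comparison be pushed below a
given stage: a family `f ∈ LF(s)` has the same germ as the section `f(t) ∈ F(t)` for any
`x < t < s`, and two sections whose images in `LF(u)` agree already agree in `F(v)` for
any `x < v < u`.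
-/

section Stalk

variable {L : Type u}

lemma stalkEta_ι [Preorder L] (F : Lᵒᵖ ⥤ Type u) {x : L} (j : ({s : L // x < s})ᵒᵖ)
    (y : F.obj (op j.unop.1)) :
    stalkEta F x (colimit.ι (stalkDiagram F x) j y) =
      colimit.ι (stalkDiagram (LFPresheaf F) x) j ((etaLF F).app (op j.unop.1) y) :=
  ConcreteCategory.congr_hom
    (ι_colimMap (Functor.whiskerLeft (Monotone.functor (Subtype.mono_coe _)).op (etaLF F)) j) y

lemma colimit_ι_stalkDiagram_eq_of_map_eq [Preorder L] (F : Lᵒᵖ ⥤ Type u) {x : L}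
    {j k : ({s : L // x < s})ᵒᵖ} {v : {s : L // x < s}} (hvj : v ≤ j.unop) (hvk : v ≤ k.unop)
    {y : (stalkDiagram F x).obj j} {z : (stalkDiagram F x).obj k}
    (h : (stalkDiagram F x).map (homOfLE hvj).op y = (stalkDiagram F x).map (homOfLE hvk).op z) :
    colimit.ι (stalkDiagram F x) j y = colimit.ι (stalkDiagram F x) k z :=
  calc colimit.ι (stalkDiagram F x) j y
      = colimit.ι (stalkDiagram F x) (op v) ((stalkDiagram F x).map (homOfLE hvj).op y) :=
        (colimit.w_apply (stalkDiagram F x) (homOfLE hvj).op y).symm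
    _ = colimit.ι (stalkDiagram F x) k z := by
        rw [h]; exact colimit.w_apply (stalkDiagram F x) (homOfLE hvk).op z

theorem stalkEta_injective [LinearOrder L] [DenselyOrdered L] (F : Lᵒᵖ ⥤ Type u) (x : L) :
    Function.Injective (stalkEta F x) := by
  intro a b hab
  obtain ⟨j, y, rfl⟩ := Types.jointly_surjective' a
  obtain ⟨k, z, rfl⟩ := Types.jointly_surjective' b
  -- `{s // x < s}ᵒᵖ` is filtered or empty because `L` is linear.
  obtain ⟨u, f, g, h⟩ := (Types.FilteredColimit.colimit_eq_iff _).mp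
    ((stalkEta_ι F j y).symm.trans (hab.trans (stalkEta_ι F k z)))
  obtain ⟨v, hxv, hvu⟩ := exists_between u.unop.2
  exact colimit_ι_stalkDiagram_eq_of_map_eq F (v := ⟨v, hxv⟩)
    (hvu.le.trans f.unop.le) (hvu.le.trans g.unop.le) (congrArg (fun w => w.1 ⟨v, hvu⟩) h)

theorem stalkEta_surjective [Preorder L] [DenselyOrdered L] (F : Lᵒᵖ ⥤ Type u) (x : L) :
    Function.Surjective (stalkEta F x) := by
  intro a
  obtain ⟨j, f, rfl⟩ := Types.jointly_surjective' a
  obtain ⟨t, hxt, htj⟩ := exists_between j.unop.2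
  refine ⟨colimit.ι (stalkDiagram F x) (op ⟨t, hxt⟩) (f.1 ⟨t, htj⟩), ?_⟩
  have eta_eq_restrict : (etaLF F).app (op t) (f.1 ⟨t, htj⟩) =
      (LFPresheaf F).map (homOfLE htj.le).op f :=
    Subtype.ext <| funext fun b => f.2 ⟨t, htj⟩ ⟨b.1, b.2.trans htj⟩ b.2.le
  exact (stalkEta_ι F _ _).trans <| (congrArg _ eta_eq_restrict).trans
    (colimit.w_apply (stalkDiagram (LFPresheaf F) x)
      (homOfLE htj.le : (⟨t, hxt⟩ : {s : L // x < s}) ⟶ j.unop).op f)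

end Stalk

theorem stmt_16_general {L : Type u} [CompleteLinearOrder L] [DenselyOrdered L]
    (F : Lᵒᵖ ⥤ Type u) (x : L) :
    Function.Bijective (stalkEta F x) :=
  ⟨stalkEta_injective F x, stalkEta_surjective F x⟩

/-- Lemma 34x, part 2: on an interval, the associated sheaf map `η : F → L²F`
induces bijections on all stalks; the stalk comparison already holds for the
separated presheaf `LF`, via `F_x = colim_{x < s} F(s) ≅ colim_{x < s} LF(s)`. -/
theorem stmt_16 {L : Type u} [CompleteLinearOrder L] [DenselyOrdered L]
    (F : Lᵒᵖ ⥤ Type u) (x : L) (hx : x ≠ ⊤) :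
    Function.Bijective (stalkEta F x) :=
  stmt_16_general F x
end

section
/- Let L be a complete linear order. Define ω : L → Set {x : L | x ≠ ⊤} by ω(y) = {x | x < y}. Then ω is an injective frame homomorphism from L into the powerset of L \ {⊤}: ω preserves arbitrary suprema (ω(sSup S) = ⋃_{y ∈ S} ω(y) for every S ⊆ L, in particular ω(⊥) = ∅), preserves binary infima (ω(a ⊓ b) = ω(a) ∩ ω(b)) and the top element (ω(⊤) = everything), and is injective. (Example 31: for a totally ordered locale L, the Boolean localization B is the powerset 𝒫(L − {1}), the poset map ω sends y to L_{<y}, and hence the sheaf category on L has enough points.) -/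
/-- The poset map `ω : L → 𝒫(L − {⊤})`, `ω(y) = L_{<y}`, of Example 31. -/
def omegaMap {L : Type*} [CompleteLinearOrder L] (y : L) : Set {x : L // x ≠ ⊤} :=
  {x : {x : L // x ≠ ⊤} | x.1 < y}

section OmegaMap

variable {L : Type*} [CompleteLinearOrder L]

@[simp]
theorem mem_omegaMap {x : {x : L // x ≠ ⊤}} {y : L} : x ∈ omegaMap y ↔ x.1 < y :=
  Iff.rfl

theorem omegaMap_sSup (S : Set L) : omegaMap (sSup S) = ⋃ y ∈ S, omegaMap y := by
  ext x
  simp [lt_sSup_iff]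

theorem omegaMap_bot : omegaMap (⊥ : L) = ∅ := by
  ext x
  simp

theorem omegaMap_inf (a b : L) : omegaMap (a ⊓ b) = omegaMap a ∩ omegaMap b := by
  ext x
  simp

theorem omegaMap_top : omegaMap (⊤ : L) = Set.univ := by
  ext x
  simpa [lt_top_iff_ne_top] using x.2

theorem omegaMap_strictMono : StrictMono (omegaMap (L := L)) := by
  intro a b hab
  refine Set.ssubset_iff_of_subset (fun x hx => lt_trans hx hab) |>.2 ?_
  exact ⟨⟨a, hab.ne_top⟩, hab, lt_irrefl a⟩

end OmegaMap

/-- Example 31: for a totally ordered locale `L`, the map `ω : L → 𝒫(L − {1})`,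
`y ↦ L_{<y}`, is an injective frame homomorphism into a complete Boolean algebra
(the powerset), so the sheaf category on `L` has enough points. -/
theorem stmt_18 {L : Type*} [CompleteLinearOrder L] :
    (∀ S : Set L, omegaMap (sSup S) = ⋃ y ∈ S, omegaMap y) ∧
    omegaMap (⊥ : L) = (∅ : Set {x : L // x ≠ ⊤}) ∧
    (∀ a b : L, omegaMap (a ⊓ b) = omegaMap a ∩ omegaMap b) ∧
    omegaMap (⊤ : L) = (Set.univ : Set {x : L // x ≠ ⊤}) ∧
    Function.Injective (omegaMap (L := L)) :=
  ⟨omegaMap_sSup, omegaMap_bot, omegaMap_inf, omegaMap_top, omegaMap_strictMono.injective⟩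
end
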